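/- Let α ∈ ℕ and n ≥ 1. Define the higher-order Laguerre-type operator L_{2α+4}^α y(x) = (−1)^{α+1} e^x x · D_x^{α+2}( e^{−x} D_x^{α+2}( x^{α+1} y(x) ) ). Then L_{2α+4}^α L_n^α(x) + (n)_{α+2} L_n^α(x) = (n+1)_α (α+1)(α+2) L_{n-1}^{α+2}(x) as functions on ℝ. -/

import Mathlib

open Real Finset

noncomputable def laguerre (n : ℕ) (γ : ℝ) : ℝ → ℝ := fun x =>
  ∑ k ∈ Finset.range (n + 1),
    (-1 : ℝ) ^ k * (ascPochhammer ℝ (n - k)).eval (γ + (k : ℝ) + 1)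
      / ((n - k).factorial * k.factorial) * x ^ k

noncomputable def lagTypeOp (α : ℕ) (y : ℝ → ℝ) : ℝ → ℝ := fun x =>
  (-1 : ℝ) ^ (α + 1) * Real.exp x * x *
    iteratedDeriv (α + 2)
      (fun t => Real.exp (-t) * iteratedDeriv (α + 2) (fun s => s ^ (α + 1) * y s) t) x

/-!
Everything reduces to polynomial identities between the Laguerre polynomials `L_n^γ`.
Conjugation by `e^{-x}` turns `D` into `D - 1`, which maps `L_n^γ` to `-L_n^{γ+1}`, so
`lagTypeOp α` acts on a polynomial `p` as `(-1)^{α+1} X (D - 1)^{α+2} D^{α+2} (X^{α+1} p)`.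
Splitting `L_n^α = L_n^{α+1} - L_{n-1}^{α+1}` and using the Rodrigues-type relation
`D^{α+1} (X^{α+1} L_n^{α+1}) = (n+1)_{α+1} L_n^0` gives
`D^{α+2} (X^{α+1} L_n^α) = (n)_{α+1} L_{n-2}^1 - (n+1)_{α+1} L_{n-1}^1`; after `(D - 1)^{α+2}` the
parameter is `α + 3`, and the three-term relation for `X L_k^{γ+1}` brings everything back to
parameter `α + 2`, where all terms but the multiple of `L_{n-1}^{α+2}` cancel.
-/

open Polynomial
open scoped Nat

lemma ascPochhammer_succ_eval_left {S : Type*} [CommSemiring S] (m : ℕ) (y : S) :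
    (ascPochhammer S (m + 1)).eval y = y * (ascPochhammer S m).eval (y + 1) := by
  simp [ascPochhammer_succ_left, eval_comp]

noncomputable def laguerreCoeff (n : ℤ) (k : ℕ) (γ : ℝ) : ℝ :=
  if (k : ℤ) ≤ n then
    (-1) ^ k * (ascPochhammer ℝ (n - k).toNat).eval (γ + k + 1) / ((n - k).toNat ! * k !)
  else 0

/-- Zero for `n < 0`, so that the recurrences below hold for every integer `n`. -/
noncomputable def laguerrePoly (n : ℤ) (γ : ℝ) : ℝ[X] :=
  ∑ k ∈ range (n.toNat + 1), C (laguerreCoeff n k γ) * X ^ k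

lemma laguerreCoeff_of_lt {n : ℤ} {k : ℕ} (h : n < k) (γ : ℝ) : laguerreCoeff n k γ = 0 := by
  simp [laguerreCoeff, not_le.2 h]

lemma laguerreCoeff_of_eq_add {n : ℤ} {k m : ℕ} (h : n = k + m) (γ : ℝ) :
    laguerreCoeff n k γ = (-1) ^ k * (ascPochhammer ℝ m).eval (γ + k + 1) / (m ! * k !) := by
  simp [laguerreCoeff, h]

lemma coeff_laguerrePoly (n : ℤ) (γ : ℝ) (k : ℕ) :
    (laguerrePoly n γ).coeff k = laguerreCoeff n k γ := by
  simp only [laguerrePoly, finsetSum_coeff, coeff_C_mul, coeff_X_pow, mul_ite, mul_one,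
    mul_zero, Finset.sum_ite_eq, Finset.mem_range]
  split_ifs with hk
  · rfl
  · exact (laguerreCoeff_of_lt (by omega) γ).symm

lemma eval_laguerrePoly (n : ℕ) (γ x : ℝ) : (laguerrePoly n γ).eval x = laguerre n γ x := by
  simp only [laguerrePoly, laguerre, eval_finsetSum, eval_mul, eval_C, eval_pow, eval_X,
    Int.toNat_natCast]
  refine sum_congr rfl fun k hk => ?_
  rw [Finset.mem_range] at hk
  rw [laguerreCoeff_of_eq_add (m := n - k) (by omega)]

lemma laguerreCoeff_succ_mul (n : ℤ) (k : ℕ) (γ : ℝ) :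
    laguerreCoeff n (k + 1) γ * (k + 1) = -laguerreCoeff (n - 1) k (γ + 1) := by
  rcases lt_or_ge n (k + 1) with h | h
  · rw [laguerreCoeff_of_lt (by push_cast; omega), laguerreCoeff_of_lt (by omega)]
    simp
  · obtain ⟨m, rfl⟩ : ∃ m : ℕ, n = k + 1 + m := ⟨(n - k - 1).toNat, by omega⟩
    rw [laguerreCoeff_of_eq_add (m := m) (by push_cast; ring),
      laguerreCoeff_of_eq_add (m := m) (by ring), Nat.factorial_succ,
      show γ + 1 + k + 1 = γ + ↑(k + 1) + 1 by push_cast; ring]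
    push_cast
    field_simp
    ring

lemma laguerreCoeff_add_one_sub (n : ℤ) (k : ℕ) (γ : ℝ) :
    laguerreCoeff n k (γ + 1) - laguerreCoeff (n - 1) k (γ + 1) = laguerreCoeff n k γ := by
  rcases lt_trichotomy n k with h | rfl | h
  · rw [laguerreCoeff_of_lt h, laguerreCoeff_of_lt h, laguerreCoeff_of_lt (by omega)]
    simp
  · rw [laguerreCoeff_of_lt (n := k - 1) (by omega), laguerreCoeff_of_eq_add (m := 0) (by simp),
      laguerreCoeff_of_eq_add (n := k) (m := 0) (by simp)]
    simp
  · obtain ⟨m, rfl⟩ : ∃ m : ℕ, n = k + m + 1 := ⟨(n - k - 1).toNat, by omega⟩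
    rw [laguerreCoeff_of_eq_add (m := m + 1) (by push_cast; ring),
      laguerreCoeff_of_eq_add (m := m) (by ring),
      laguerreCoeff_of_eq_add (n := k + m + 1) (m := m + 1) (by push_cast; ring),
      show γ + 1 + k + 1 = γ + k + 1 + 1 by ring, ascPochhammer_succ_eval,
      ascPochhammer_succ_eval_left m (γ + k + 1), Nat.factorial_succ]
    push_cast
    field_simp
    ring

lemma laguerreCoeff_add_one_mul (n : ℤ) (k : ℕ) (β : ℝ) :
    laguerreCoeff n k (β + 1) * (k + β + 1) = (n + β + 1) * laguerreCoeff n k β := by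
  rcases lt_or_ge n k with h | h
  · simp [laguerreCoeff_of_lt h]
  · obtain ⟨m, rfl⟩ : ∃ m : ℕ, n = k + m := ⟨(n - k).toNat, by omega⟩
    rw [laguerreCoeff_of_eq_add rfl, laguerreCoeff_of_eq_add rfl,
      show β + 1 + k + 1 = β + k + 1 + 1 by ring]
    have key := ascPochhammer_succ_eval_left m (β + k + 1)
    rw [ascPochhammer_succ_eval] at key
    push_cast
    linear_combination -(-1) ^ k / (m ! * k ! : ℝ) * key

lemma laguerreCoeff_zero_mul (n : ℤ) (β : ℝ) :
    (n + β + 1) * laguerreCoeff n 0 β = (n + 1) * laguerreCoeff (n + 1) 0 β := by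
  rcases lt_or_ge n 0 with h | h
  · rcases (show n + 1 < 0 ∨ n = -1 by omega) with h' | rfl
    · simp [laguerreCoeff_of_lt h, laguerreCoeff_of_lt (n := n + 1) (k := 0) (by exact_mod_cast h')]
    · simp [laguerreCoeff_of_lt h]
  · obtain ⟨m, rfl⟩ : ∃ m : ℕ, n = m := ⟨n.toNat, by omega⟩
    rw [laguerreCoeff_of_eq_add (m := m) (by simp),
      laguerreCoeff_of_eq_add (m := m + 1) (by push_cast; ring), ascPochhammer_succ_eval,
      Nat.factorial_succ]
    push_cast
    field_simp
    ring

lemma laguerreCoeff_add_one_eq_sub (n : ℤ) (i : ℕ) (β : ℝ) :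
    laguerreCoeff n i (β + 1)
      = (n + β + 1) * laguerreCoeff n (i + 1) β - (n + 1) * laguerreCoeff (n + 1) (i + 1) β := by
  rcases lt_trichotomy n i with h | rfl | h
  · simp [laguerreCoeff_of_lt h, laguerreCoeff_of_lt (n := n) (k := i + 1) (by omega),
      laguerreCoeff_of_lt (n := n + 1) (k := i + 1) (by push_cast; omega)]
  · rw [laguerreCoeff_of_lt (n := i) (k := i + 1) (by push_cast; omega),
      laguerreCoeff_of_eq_add (m := 0) (by simp),
      laguerreCoeff_of_eq_add (n := i + 1) (m := 0) (by push_cast; ring), Nat.factorial_succ]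
    push_cast [ascPochhammer_zero, eval_one]
    field_simp
    ring
  · obtain ⟨m, rfl⟩ : ∃ m : ℕ, n = i + m + 1 := ⟨(n - i - 1).toNat, by omega⟩
    rw [laguerreCoeff_of_eq_add (m := m + 1) (by push_cast; ring),
      laguerreCoeff_of_eq_add (m := m) (by push_cast; ring),
      laguerreCoeff_of_eq_add (m := m + 1) (by push_cast; ring),
      show β + 1 + i + 1 = β + ↑(i + 1) + 1 by push_cast; ring, ascPochhammer_succ_eval,
      Nat.factorial_succ, Nat.factorial_succ]
    push_cast
    field_simp
    ring

lemma derivative_laguerrePoly (n : ℤ) (γ : ℝ) :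
    derivative (laguerrePoly n γ) = -laguerrePoly (n - 1) (γ + 1) := by
  ext k
  rw [coeff_derivative, coeff_neg, coeff_laguerrePoly, coeff_laguerrePoly]
  exact laguerreCoeff_succ_mul n k γ

lemma laguerrePoly_add_one_sub (n : ℤ) (γ : ℝ) :
    laguerrePoly n (γ + 1) - laguerrePoly (n - 1) (γ + 1) = laguerrePoly n γ := by
  ext k
  simp only [coeff_sub, coeff_laguerrePoly]
  exact laguerreCoeff_add_one_sub n k γ

lemma X_mul_laguerrePoly (n : ℤ) (β : ℝ) :
    X * laguerrePoly n (β + 1)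
      = ((n : ℝ) + β + 1) • laguerrePoly n β - ((n : ℝ) + 1) • laguerrePoly (n + 1) β := by
  ext (_ | i)
  · simp only [coeff_X_mul_zero, coeff_sub, coeff_smul, coeff_laguerrePoly, smul_eq_mul]
    rw [laguerreCoeff_zero_mul, sub_self]
  · simp only [coeff_X_mul, coeff_sub, coeff_smul, coeff_laguerrePoly, smul_eq_mul]
    exact laguerreCoeff_add_one_eq_sub n i β

lemma derivative_X_pow_succ_mul_laguerrePoly (n : ℤ) (m : ℕ) :
    derivative (X ^ (m + 1) * laguerrePoly n (m + 1))
      = ((n : ℝ) + m + 1) • (X ^ m * laguerrePoly n m) := by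
  simp only [laguerrePoly, Finset.mul_sum, Finset.smul_sum, derivative_sum]
  refine sum_congr rfl fun k _ => ?_
  rw [show X ^ (m + 1) * (C (laguerreCoeff n k (m + 1)) * X ^ k)
      = C (laguerreCoeff n k (m + 1)) * X ^ (k + m + 1) by ring,
    show X ^ m * (C (laguerreCoeff n k m) * X ^ k) = C (laguerreCoeff n k m) * X ^ (k + m) by ring,
    derivative_C_mul_X_pow, Nat.add_sub_cancel, ← smul_mul_assoc, smul_C, smul_eq_mul,
    ← laguerreCoeff_add_one_mul]
  push_cast
  ring

lemma iterate_derivative_X_pow_mul_laguerrePoly (n : ℤ) (j : ℕ) :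
    derivative^[j] (X ^ j * laguerrePoly n j)
      = (ascPochhammer ℝ j).eval ((n : ℝ) + 1) • laguerrePoly n 0 := by
  induction j with
  | zero => simp
  | succ j ih =>
    rw [Function.iterate_succ_apply, Nat.cast_succ, derivative_X_pow_succ_mul_laguerrePoly,
      iterate_derivative_smul, ih, smul_smul, ascPochhammer_succ_eval]
    congr 1
    ring

lemma laguerrePoly_sub_derivative (n : ℤ) (γ : ℝ) :
    (derivative - 1 : Module.End ℝ ℝ[X]) (laguerrePoly n γ) = -laguerrePoly n (γ + 1) := by
  rw [LinearMap.sub_apply, Module.End.one_apply, derivative_laguerrePoly,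
    ← laguerrePoly_add_one_sub n γ]
  abel

lemma pow_derivative_sub_one_laguerrePoly (n : ℤ) (γ : ℝ) (j : ℕ) :
    ((derivative - 1 : Module.End ℝ ℝ[X]) ^ j) (laguerrePoly n γ)
      = (-1 : ℝ) ^ j • laguerrePoly n (γ + j) := by
  induction j generalizing γ with
  | zero => simp
  | succ j ih =>
    rw [pow_succ, Module.End.mul_apply, laguerrePoly_sub_derivative, map_neg, ih, pow_succ,
      mul_neg_one, neg_smul, Nat.cast_succ, add_assoc, add_comm 1]

lemma iterate_derivative_X_pow_succ_mul_laguerrePoly (n : ℤ) (α : ℕ) :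
    derivative^[α + 2] (X ^ (α + 1) * laguerrePoly n α)
      = (ascPochhammer ℝ (α + 1)).eval (n : ℝ) • laguerrePoly (n - 2) 1
        - (ascPochhammer ℝ (α + 1)).eval ((n : ℝ) + 1) • laguerrePoly (n - 1) 1 := by
  have hα : (α : ℝ) + 1 = ((α + 1 : ℕ) : ℝ) := by push_cast; ring
  rw [← laguerrePoly_add_one_sub n α, hα, mul_sub, Function.iterate_succ_apply',
    iterate_derivative_sub, iterate_derivative_X_pow_mul_laguerrePoly,
    iterate_derivative_X_pow_mul_laguerrePoly, derivative_sub, derivative_smul, derivative_smul,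
    derivative_laguerrePoly, derivative_laguerrePoly, zero_add, show n - 1 - 1 = n - 2 by ring]
  push_cast
  rw [sub_add_cancel]
  module

lemma X_mul_laguerrePoly_combination (n : ℤ) (α : ℕ) :
    X * ((ascPochhammer ℝ (α + 1)).eval ((n : ℝ) + 1) • laguerrePoly (n - 1) (α + 3)
          - (ascPochhammer ℝ (α + 1)).eval (n : ℝ) • laguerrePoly (n - 2) (α + 3))
        + (ascPochhammer ℝ (α + 2)).eval (n : ℝ) • laguerrePoly n α
      = ((ascPochhammer ℝ α).eval ((n : ℝ) + 1) * (α + 1) * (α + 2))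
          • laguerrePoly (n - 1) (α + 2) := by
  have hα : laguerrePoly n α = laguerrePoly n (α + 2) - (2 : ℝ) • laguerrePoly (n - 1) (α + 2)
      + laguerrePoly (n - 2) (α + 2) := by
    rw [← laguerrePoly_add_one_sub n α, ← laguerrePoly_add_one_sub n (α + 1),
      ← laguerrePoly_add_one_sub (n - 1) (α + 1), add_assoc (α : ℝ) 1 1, sub_sub n 1 1,
      one_add_one_eq_two, one_add_one_eq_two]
    module
  rw [mul_sub, mul_smul_comm, mul_smul_comm, show (α : ℝ) + 3 = α + 2 + 1 by ring,
    X_mul_laguerrePoly, X_mul_laguerrePoly, hα, ascPochhammer_succ_eval_left (α + 1) (n : ℝ),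
    ascPochhammer_succ_eval_left α (n : ℝ), ascPochhammer_succ_eval α ((n : ℝ) + 1)]
  push_cast
  rw [sub_add_cancel n 1, show n - 2 + 1 = n - 1 by ring]
  module

noncomputable def lagTypeOpPoly (α : ℕ) (p : ℝ[X]) : ℝ[X] :=
  (-1 : ℝ) ^ (α + 1) • (X * ((derivative - 1 : Module.End ℝ ℝ[X]) ^ (α + 2))
    (derivative^[α + 2] (X ^ (α + 1) * p)))

lemma lagTypeOpPoly_laguerrePoly (α : ℕ) (n : ℤ) :
    lagTypeOpPoly α (laguerrePoly n α) + (ascPochhammer ℝ (α + 2)).eval (n : ℝ) • laguerrePoly n α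
      = ((ascPochhammer ℝ α).eval ((n : ℝ) + 1) * (α + 1) * (α + 2))
          • laguerrePoly (n - 1) (α + 2) := by
  have hsign (w : ℝ[X]) : (-1 : ℝ) ^ (α + 1) • (X * ((-1 : ℝ) ^ (α + 2) • w)) = -(X * w) := by
    rw [mul_smul_comm, smul_smul, ← pow_add, Odd.neg_one_pow ⟨α + 1, by ring⟩, neg_one_smul]
  rw [← X_mul_laguerrePoly_combination, lagTypeOpPoly,
    iterate_derivative_X_pow_succ_mul_laguerrePoly, map_sub, map_smul, map_smul,
    pow_derivative_sub_one_laguerrePoly, pow_derivative_sub_one_laguerrePoly,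
    smul_comm _ _ (laguerrePoly (n - 2) _), smul_comm _ _ (laguerrePoly (n - 1) _), ← smul_sub,
    hsign, ← mul_neg, neg_sub]
  push_cast
  rw [show (1 : ℝ) + (α + 2) = α + 3 by ring]

lemma iteratedDeriv_eval {𝕜 : Type*} [NontriviallyNormedField 𝕜] (p : 𝕜[X]) (m : ℕ) :
    iteratedDeriv m (fun x => p.eval x) = fun x => (derivative^[m] p).eval x := by
  induction m with
  | zero => simp
  | succ m ih =>
    rw [iteratedDeriv_succ, ih, Function.iterate_succ_apply']
    exact funext fun x => Polynomial.deriv _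

lemma deriv_exp_neg_mul_eval (q : ℝ[X]) :
    deriv (fun t => exp (-t) * q.eval t)
      = fun t => exp (-t) * ((derivative - 1 : Module.End ℝ ℝ[X]) q).eval t := by
  funext t
  have hexp : HasDerivAt (fun t => exp (-t)) (-exp (-t)) t := by
    simpa using (hasDerivAt_neg t).exp
  have hprod : HasDerivAt (fun t => exp (-t) * q.eval t)
      (-exp (-t) * q.eval t + exp (-t) * (derivative q).eval t) t := hexp.mul (q.hasDerivAt t)
  rw [hprod.deriv, LinearMap.sub_apply, Module.End.one_apply, eval_sub]
  ring

lemma iteratedDeriv_exp_neg_mul_eval (m : ℕ) (q : ℝ[X]) :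
    iteratedDeriv m (fun t => exp (-t) * q.eval t)
      = fun t => exp (-t) * (((derivative - 1 : Module.End ℝ ℝ[X]) ^ m) q).eval t := by
  induction m generalizing q with
  | zero => simp
  | succ m ih => rw [iteratedDeriv_succ', deriv_exp_neg_mul_eval, ih, pow_succ, Module.End.mul_apply]

lemma lagTypeOp_eval (α : ℕ) (p : ℝ[X]) :
    lagTypeOp α (fun s => p.eval s) = fun x => (lagTypeOpPoly α p).eval x := by
  have hmul : (fun s => s ^ (α + 1) * p.eval s) = fun s => (X ^ (α + 1) * p).eval s := by
    simp
  funext x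
  simp only [lagTypeOp, lagTypeOpPoly, hmul]
  simp only [iteratedDeriv_eval, iteratedDeriv_exp_neg_mul_eval]
  simp only [eval_smul, eval_mul, eval_X, smul_eq_mul]
  rw [exp_neg]
  field_simp

theorem laguerre_type_second_identity (α : ℕ) (n : ℕ) (hn : 1 ≤ n) (x : ℝ) :
    lagTypeOp α (laguerre n (α : ℝ)) x
        + (ascPochhammer ℝ (α + 2)).eval (n : ℝ) * laguerre n (α : ℝ) x
      = (ascPochhammer ℝ α).eval ((n : ℝ) + 1) * ((α : ℝ) + 1) * ((α : ℝ) + 2)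
          * laguerre (n - 1) ((α : ℝ) + 2) x := by
  have hpoly : laguerre n α = fun s => (laguerrePoly n α).eval s :=
    funext fun s => (eval_laguerrePoly n α s).symm
  have hpred : ((n - 1 : ℕ) : ℤ) = n - 1 := by omega
  rw [hpoly, lagTypeOp_eval, ← eval_laguerrePoly, hpred]
  simpa using congrArg (eval x) (lagTypeOpPoly_laguerrePoly α n)
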